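/- Let m, t be nonnegative integers with m + t ≥ 1, and let f_1,…,f_m, l_1,…,l_t, c, ε be real constants with 0 < f_i < 1 for all i, 0 < l_j < 1 for all j, 0 < c < 1, and 0 < ε < min{ log_{c/(2(m+t))}(1−f_1), …, log_{c/(2(m+t))}(1−f_m), log_{c/(2(m+t))}(1−l_1), …, log_{c/(2(m+t))}(1−l_t) }. Let T be an ε-critical tournament with |T| = n, and let S_1,…,S_m, P_1,…,P_t be m + t pairwise vertex-disjoint transitive induced subtournaments of T with |S_i| ≥ f_i·tr(T) for i = 1,…,m and |P_j| ≥ l_j·tr(T) for j = 1,…,t. Let A ⊆ V(T) \ (V(S_1) ∪ … ∪ V(S_m) ∪ V(P_1) ∪ … ∪ V(P_t)) with |A| ≥ cn. Then there exist vertices g ∈ A, s_i ∈ V(S_i) for i = 1,…,m and p_j ∈ V(P_j) for j = 1,…,t such that (g, s_i) is an arc of T for every i = 1,…,m and (p_j, g) is an arc of T for every j = 1,…,t. -/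

import Mathlib

open Finset

/-- A tournament on vertex set `Fin n`: `adj u v` means there is an arc from `u` to `v`. -/
structure Tournament (n : ℕ) where
  adj : Fin n → Fin n → Prop
  asymm : ∀ u v, adj u v → ¬ adj v u
  total : ∀ u v, u ≠ v → adj u v ∨ adj v u

namespace Tournament

variable {n N : ℕ}

/-- The position of vertex `v` in the ordering `θ`, where `θ k` is the `k`-th vertex. -/
def pos (θ : Equiv.Perm (Fin n)) (v : Fin n) : Fin n := θ.symm v

/-- The arc `u → v` of `T` is a backward arc under the ordering `θ`. -/
def Backward (T : Tournament n) (θ : Equiv.Perm (Fin n)) (u v : Fin n) : Prop :=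
  T.adj u v ∧ pos θ v < pos θ u

/-- `x` lies strictly between two elements of `L` under the ordering `θ`. -/
def BetweenSet (θ : Equiv.Perm (Fin n)) (L : Finset (Fin n)) (x : Fin n) : Prop :=
  ∃ u ∈ L, ∃ w ∈ L, pos θ u < pos θ x ∧ pos θ x < pos θ w

/-- The induced subtournament of `T` on `s` is transitive. -/
def IsTransOn (T : Tournament n) (s : Finset (Fin n)) : Prop :=
  ∀ u ∈ s, ∀ v ∈ s, ∀ w ∈ s, T.adj u v → T.adj v w → T.adj u w

/-- The largest size of a transitive subtournament of `T` contained in `s`. -/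
noncomputable def trSizeOn (T : Tournament n) (s : Finset (Fin n)) : ℕ :=
  sSup {k | ∃ t, t ⊆ s ∧ T.IsTransOn t ∧ t.card = k}

/-- `tr(T)`: the largest size of a transitive subtournament of `T`. -/
noncomputable def trSize (T : Tournament n) : ℕ := T.trSizeOn Finset.univ

/-- `T` contains `H`: some induced subtournament of `T` is isomorphic to `H`. -/
def Contains (T : Tournament N) (H : Tournament n) : Prop :=
  ∃ f : Fin n ↪ Fin N, ∀ u v, H.adj u v ↔ T.adj (f u) (f v)

/-- `T` is `ε`-critical. -/
def EpsCritical (T : Tournament n) (ε : ℝ) : Prop :=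
  ((T.trSize : ℝ) < (n : ℝ) ^ ε) ∧
  ∀ s : Finset (Fin n), s ≠ Finset.univ → ((s.card : ℝ) ^ ε ≤ (T.trSizeOn s : ℝ))

/-- `S` with center `c` is a right star of `T` under `θ`. -/
def IsRightStarAt (T : Tournament n) (θ : Equiv.Perm (Fin n)) (S : Finset (Fin n))
    (c : Fin n) : Prop :=
  c ∈ S ∧ (S.erase c).Nonempty ∧
  (∀ v ∈ S.erase c, pos θ v < pos θ c ∧ T.adj c v) ∧
  (∀ u ∈ S, ∀ v ∈ S, T.Backward θ u v → u = c)

/-- `S` with center `c` is a left star of `T` under `θ`. -/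
def IsLeftStarAt (T : Tournament n) (θ : Equiv.Perm (Fin n)) (S : Finset (Fin n))
    (c : Fin n) : Prop :=
  c ∈ S ∧ (S.erase c).Nonempty ∧
  (∀ v ∈ S.erase c, pos θ c < pos θ v ∧ T.adj v c) ∧
  (∀ u ∈ S, ∀ v ∈ S, T.Backward θ u v → v = c)

/-- `S` with center `c` is a middle star of `T` under `θ`. -/
def IsMiddleStarAt (T : Tournament n) (θ : Equiv.Perm (Fin n)) (S : Finset (Fin n))
    (c : Fin n) : Prop :=
  c ∈ S ∧
  (∃ v ∈ S.erase c, pos θ v < pos θ c) ∧ (∃ v ∈ S.erase c, pos θ c < pos θ v) ∧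
  (∀ v ∈ S.erase c, (pos θ v < pos θ c → T.adj c v) ∧ (pos θ c < pos θ v → T.adj v c)) ∧
  (∀ u ∈ S, ∀ v ∈ S, T.Backward θ u v → u = c ∨ v = c)

def IsFrontierStarAt (T : Tournament n) (θ : Equiv.Perm (Fin n)) (S : Finset (Fin n))
    (c : Fin n) : Prop :=
  T.IsLeftStarAt θ S c ∨ T.IsRightStarAt θ S c

def IsStarAt (T : Tournament n) (θ : Equiv.Perm (Fin n)) (S : Finset (Fin n))
    (c : Fin n) : Prop :=
  T.IsLeftStarAt θ S c ∨ T.IsRightStarAt θ S c ∨ T.IsMiddleStarAt θ S c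

/-- A middle star with exactly one leaf after the center (center is `u_{p-1}`). -/
def IsOneRightMiddleStarAt (T : Tournament n) (θ : Equiv.Perm (Fin n)) (S : Finset (Fin n))
    (c : Fin n) : Prop :=
  T.IsMiddleStarAt θ S c ∧ ((S.erase c).filter (fun v => pos θ c < pos θ v)).card = 1

/-- A middle star with exactly one leaf before the center (center is `u_2`). -/
def IsOneLeftMiddleStarAt (T : Tournament n) (θ : Equiv.Perm (Fin n)) (S : Finset (Fin n))
    (c : Fin n) : Prop :=
  T.IsMiddleStarAt θ S c ∧ ((S.erase c).filter (fun v => pos θ v < pos θ c)).card = 1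

/-- Kinds of super 2-nebulas. -/
inductive NebKind
  | left
  | middle
  | right

/-- Common requirements on the data of a super 2-nebula: vertex set `S`, centers `c₁, c₂`
(`c₁` before `c₂` under `θ`), leaves `L₁` incident to `c₁` and `L₂` incident to `c₂`. -/
def Super2NebCommon (θ : Equiv.Perm (Fin n)) (S : Finset (Fin n)) (c₁ c₂ : Fin n)
    (L₁ L₂ : Finset (Fin n)) : Prop :=
  L₁.Nonempty ∧ L₂.Nonempty ∧ Disjoint L₁ L₂ ∧
  c₁ ∉ L₁ ∪ L₂ ∧ c₂ ∉ L₁ ∪ L₂ ∧ c₁ ≠ c₂ ∧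
  S = insert c₁ (insert c₂ (L₁ ∪ L₂)) ∧ pos θ c₁ < pos θ c₂

/-- `S` is a super (left/middle/right) 2-nebula of `T` under `θ`, with centers `c₁, c₂` and
leaves `L₁` (incident to `c₁`) and `L₂` (incident to `c₂`). -/
def IsSuper2NebulaAt (T : Tournament n) (θ : Equiv.Perm (Fin n)) (S : Finset (Fin n))
    (c₁ c₂ : Fin n) (L₁ L₂ : Finset (Fin n)) : NebKind → Prop
  | NebKind.middle =>
      Super2NebCommon θ S c₁ c₂ L₁ L₂ ∧
      (∀ v ∈ L₁ ∪ L₂, pos θ c₁ < pos θ v ∧ pos θ v < pos θ c₂) ∧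
      (∀ v ∈ L₁, T.adj v c₁) ∧ (∀ v ∈ L₂, T.adj c₂ v) ∧ T.adj c₂ c₁ ∧
      (∀ u ∈ S, ∀ v ∈ S, T.Backward θ u v →
        (u ∈ L₁ ∧ v = c₁) ∨ (u = c₂ ∧ v ∈ L₂) ∨ (u = c₂ ∧ v = c₁))
  | NebKind.left =>
      Super2NebCommon θ S c₁ c₂ L₁ L₂ ∧
      (∀ v ∈ L₁ ∪ L₂, pos θ v < pos θ c₁) ∧
      (∀ v ∈ L₁, T.adj c₁ v) ∧ (∀ v ∈ L₂, T.adj c₂ v) ∧ T.adj c₂ c₁ ∧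
      (∀ u ∈ S, ∀ v ∈ S, T.Backward θ u v →
        (u = c₁ ∧ v ∈ L₁) ∨ (u = c₂ ∧ v ∈ L₂) ∨ (u = c₂ ∧ v = c₁))
  | NebKind.right =>
      Super2NebCommon θ S c₁ c₂ L₁ L₂ ∧
      (∀ v ∈ L₁ ∪ L₂, pos θ c₂ < pos θ v) ∧
      (∀ v ∈ L₁, T.adj v c₁) ∧ (∀ v ∈ L₂, T.adj v c₂) ∧ T.adj c₂ c₁ ∧
      (∀ u ∈ S, ∀ v ∈ S, T.Backward θ u v →
        (u ∈ L₁ ∧ v = c₁) ∨ (u ∈ L₂ ∧ v = c₂) ∨ (u = c₂ ∧ v = c₁))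

/-- A decomposition of `T` witnessing that `T` is a super nebula under `θ`, with stars
`Q i` (centers `ctr i`) and super 2-nebulas `Sig i` (centers `c₁ i, c₂ i`, leaves
`L₁ i, L₂ i`, of kind `kd i`). -/
def SuperNebulaDecomp (T : Tournament n) (θ : Equiv.Perm (Fin n)) {m l : ℕ}
    (Q : Fin m → Finset (Fin n)) (ctr : Fin m → Fin n)
    (Sig : Fin l → Finset (Fin n)) (c₁ c₂ : Fin l → Fin n)
    (L₁ L₂ : Fin l → Finset (Fin n)) (kd : Fin l → NebKind) : Prop :=
  (∀ i, T.IsStarAt θ (Q i) (ctr i)) ∧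
  (∀ i, T.IsSuper2NebulaAt θ (Sig i) (c₁ i) (c₂ i) (L₁ i) (L₂ i) (kd i)) ∧
  (∀ i j, i ≠ j → Disjoint (Q i) (Q j)) ∧
  (∀ i j, i ≠ j → Disjoint (Sig i) (Sig j)) ∧
  (∀ i j, Disjoint (Q i) (Sig j)) ∧
  (∀ u v, T.Backward θ u v → (∃ i, u ∈ Q i ∧ v ∈ Q i) ∨ (∃ i, u ∈ Sig i ∧ v ∈ Sig i)) ∧
  (∀ i j, ¬ BetweenSet θ (L₁ j ∪ L₂ j) (ctr i)) ∧
  (∀ i j, i ≠ j → ¬ BetweenSet θ (L₁ j ∪ L₂ j) (c₁ i) ∧ ¬ BetweenSet θ (L₁ j ∪ L₂ j) (c₂ i))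

/-- `T` is a super nebula. -/
def IsSuperNebula (T : Tournament n) : Prop :=
  ∃ (θ : Equiv.Perm (Fin n)) (m l : ℕ) (Q : Fin m → Finset (Fin n)) (ctr : Fin m → Fin n)
    (Sig : Fin l → Finset (Fin n)) (c₁ c₂ : Fin l → Fin n)
    (L₁ L₂ : Fin l → Finset (Fin n)) (kd : Fin l → NebKind),
    SuperNebulaDecomp T θ Q ctr Sig c₁ c₂ L₁ L₂ kd

/-- `{a, b, c}` (in this position order) is a triangle of `T` under `θ`:
`a` is the left exterior, `b` the center, `c` the right exterior. -/
def IsTriangleAt (T : Tournament n) (θ : Equiv.Perm (Fin n)) (a b c : Fin n) : Prop :=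
  pos θ a < pos θ b ∧ pos θ b < pos θ c ∧ T.adj b a ∧ T.adj c a ∧ T.adj c b

/-- A decomposition of `T` under `θ` into triangles `{A i, B i, C i}` (left exterior, center,
right exterior) and frontier stars `Q j` with centers `ctr j`, where for each triangle `i`,
the vertices in `forb i` are not allowed to lie between leaves of a star. -/
def TriGalaxyDecomp (T : Tournament n) (θ : Equiv.Perm (Fin n)) {l k : ℕ}
    (A B C : Fin l → Fin n) (Q : Fin k → Finset (Fin n)) (ctr : Fin k → Fin n)
    (forb : Fin l → Finset (Fin n)) : Prop :=
  (∀ i, T.IsTriangleAt θ (A i) (B i) (C i)) ∧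
  (∀ j, T.IsFrontierStarAt θ (Q j) (ctr j)) ∧
  (∀ i j, i ≠ j →
    Disjoint ({A i, B i, C i} : Finset (Fin n)) ({A j, B j, C j} : Finset (Fin n))) ∧
  (∀ i j, Disjoint ({A i, B i, C i} : Finset (Fin n)) (Q j)) ∧
  (∀ i j, i ≠ j → Disjoint (Q i) (Q j)) ∧
  (∀ u v, T.Backward θ u v →
    (∃ i, u ∈ ({A i, B i, C i} : Finset (Fin n)) ∧ v ∈ ({A i, B i, C i} : Finset (Fin n))) ∨
    (∃ j, u ∈ Q j ∧ v ∈ Q j)) ∧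
  (∀ i j, i ≠ j → ¬ BetweenSet θ ((Q j).erase (ctr j)) (ctr i)) ∧
  (∀ i j, ∀ x ∈ forb i, ¬ BetweenSet θ ((Q j).erase (ctr j)) x)

/-- `T` is a Δgalaxy: a triangular galaxy with exactly one triangle. -/
def IsDeltaGalaxy (T : Tournament n) : Prop :=
  ∃ (θ : Equiv.Perm (Fin n)) (a b c : Fin n) (k : ℕ)
    (Q : Fin k → Finset (Fin n)) (ctr : Fin k → Fin n),
    TriGalaxyDecomp T θ (fun _ : Fin 1 => a) (fun _ => b) (fun _ => c) Q ctr
      (fun _ => ({a, b, c} : Finset (Fin n)))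

/-- `T` is a central triangular galaxy: centers of triangles may lie between leaves of stars. -/
def IsCentralTriangularGalaxy (T : Tournament n) : Prop :=
  ∃ (θ : Equiv.Perm (Fin n)) (l k : ℕ) (A B C : Fin l → Fin n)
    (Q : Fin k → Finset (Fin n)) (ctr : Fin k → Fin n),
    TriGalaxyDecomp T θ A B C Q ctr (fun i => ({A i, C i} : Finset (Fin n)))

/-- `T` is a left triangular galaxy: left exteriors of triangles may lie between leaves. -/
def IsLeftTriangularGalaxy (T : Tournament n) : Prop :=
  ∃ (θ : Equiv.Perm (Fin n)) (l k : ℕ) (A B C : Fin l → Fin n)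
    (Q : Fin k → Finset (Fin n)) (ctr : Fin k → Fin n),
    TriGalaxyDecomp T θ A B C Q ctr (fun i => ({B i, C i} : Finset (Fin n)))

/-- `T` is a right triangular galaxy: right exteriors of triangles may lie between leaves. -/
def IsRightTriangularGalaxy (T : Tournament n) : Prop :=
  ∃ (θ : Equiv.Perm (Fin n)) (l k : ℕ) (A B C : Fin l → Fin n)
    (Q : Fin k → Finset (Fin n)) (ctr : Fin k → Fin n),
    TriGalaxyDecomp T θ A B C Q ctr (fun i => ({A i, B i} : Finset (Fin n)))

/-- A decomposition of `T` witnessing that `T` is a nebula under `θ` (no condition on the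
location of the centers of the stars). -/
def NebulaDecomp (T : Tournament n) (θ : Equiv.Perm (Fin n)) {k : ℕ}
    (Q : Fin k → Finset (Fin n)) (ctr : Fin k → Fin n) : Prop :=
  (∀ i, T.IsStarAt θ (Q i) (ctr i)) ∧
  (∀ i j, i ≠ j → Disjoint (Q i) (Q j)) ∧
  (∀ u v, T.Backward θ u v → ∃ i, u ∈ Q i ∧ v ∈ Q i)

/-- `T` is a central nebula: a nebula all of whose stars are 3-vertex middle stars. -/
def IsCentralNebula (T : Tournament n) : Prop :=
  ∃ (θ : Equiv.Perm (Fin n)) (k : ℕ) (Q : Fin k → Finset (Fin n)) (ctr : Fin k → Fin n),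
    NebulaDecomp T θ Q ctr ∧ ∀ i, T.IsMiddleStarAt θ (Q i) (ctr i) ∧ (Q i).card = 3

/-- `T` is a super left nebula: a nebula all of whose stars are left stars. -/
def IsSuperLeftNebula (T : Tournament n) : Prop :=
  ∃ (θ : Equiv.Perm (Fin n)) (k : ℕ) (Q : Fin k → Finset (Fin n)) (ctr : Fin k → Fin n),
    NebulaDecomp T θ Q ctr ∧ ∀ i, T.IsLeftStarAt θ (Q i) (ctr i)

/-- `T` is a super right nebula: a nebula all of whose stars are right stars. -/
def IsSuperRightNebula (T : Tournament n) : Prop :=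
  ∃ (θ : Equiv.Perm (Fin n)) (k : ℕ) (Q : Fin k → Finset (Fin n)) (ctr : Fin k → Fin n),
    NebulaDecomp T θ Q ctr ∧ ∀ i, T.IsRightStarAt θ (Q i) (ctr i)

/-- `T` is an LR-Δgalaxy: a super Δgalaxy in which only the two exteriors of the triangle
may lie between leaves of a star. -/
def IsLRDeltaGalaxy (T : Tournament n) : Prop :=
  ∃ (θ : Equiv.Perm (Fin n)) (a b c : Fin n) (k : ℕ)
    (Q : Fin k → Finset (Fin n)) (ctr : Fin k → Fin n),
    TriGalaxyDecomp T θ (fun _ : Fin 1 => a) (fun _ => b) (fun _ => c) Q ctr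
      (fun _ => ({b} : Finset (Fin n)))

/-- `T` is a CR-Δgalaxy. -/
def IsCRDeltaGalaxy (T : Tournament n) : Prop :=
  ∃ (θ : Equiv.Perm (Fin n)) (a b c : Fin n) (k : ℕ)
    (Q : Fin k → Finset (Fin n)) (ctr : Fin k → Fin n),
    TriGalaxyDecomp T θ (fun _ : Fin 1 => a) (fun _ => b) (fun _ => c) Q ctr
      (fun _ => ({a} : Finset (Fin n))) ∧
    (∀ i j, i ≠ j → BetweenSet θ ((Q i).erase (ctr i)) b →
      BetweenSet θ ((Q j).erase (ctr j)) c →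
      (∀ x ∈ (Q i).erase (ctr i), ¬ BetweenSet θ ((Q j).erase (ctr j)) x) ∧
      (∀ x ∈ (Q j).erase (ctr j), ¬ BetweenSet θ ((Q i).erase (ctr i)) x)) ∧
    (∀ i, BetweenSet θ ((Q i).erase (ctr i)) b → ¬ BetweenSet θ ((Q i).erase (ctr i)) c)

/-- `T` is a CL-Δgalaxy. -/
def IsCLDeltaGalaxy (T : Tournament n) : Prop :=
  ∃ (θ : Equiv.Perm (Fin n)) (a b c : Fin n) (k : ℕ)
    (Q : Fin k → Finset (Fin n)) (ctr : Fin k → Fin n),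
    TriGalaxyDecomp T θ (fun _ : Fin 1 => a) (fun _ => b) (fun _ => c) Q ctr
      (fun _ => ({c} : Finset (Fin n))) ∧
    (∀ i j, i ≠ j → BetweenSet θ ((Q i).erase (ctr i)) b →
      BetweenSet θ ((Q j).erase (ctr j)) a →
      (∀ x ∈ (Q i).erase (ctr i), ¬ BetweenSet θ ((Q j).erase (ctr j)) x) ∧
      (∀ x ∈ (Q j).erase (ctr j), ¬ BetweenSet θ ((Q i).erase (ctr i)) x)) ∧
    (∀ i, BetweenSet θ ((Q i).erase (ctr i)) b → ¬ BetweenSet θ ((Q i).erase (ctr i)) a)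

/-- A decomposition of `T` under `θ` into one super 2-nebula (of kind `kd`) and frontier
stars, covering all of `V(T)`, witnessing that `T` is a Σ-galaxy under `θ`. -/
def SigmaGalaxyDecomp (T : Tournament n) (θ : Equiv.Perm (Fin n))
    (S : Finset (Fin n)) (c₁ c₂ : Fin n) (L₁ L₂ : Finset (Fin n)) (kd : NebKind)
    {m : ℕ} (Q : Fin m → Finset (Fin n)) (ctr : Fin m → Fin n) : Prop :=
  T.IsSuper2NebulaAt θ S c₁ c₂ L₁ L₂ kd ∧
  (∀ j, T.IsFrontierStarAt θ (Q j) (ctr j)) ∧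
  (∀ i j, i ≠ j → Disjoint (Q i) (Q j)) ∧
  (∀ j, Disjoint S (Q j)) ∧
  (∀ v, v ∈ S ∨ ∃ j, v ∈ Q j) ∧
  (∀ u v, T.Backward θ u v → (u ∈ S ∧ v ∈ S) ∨ ∃ j, u ∈ Q j ∧ v ∈ Q j) ∧
  (∀ j, ¬ BetweenSet θ (L₁ ∪ L₂) (ctr j)) ∧
  (∀ j, ¬ BetweenSet θ ((Q j).erase (ctr j)) c₁ ∧ ¬ BetweenSet θ ((Q j).erase (ctr j)) c₂) ∧
  (∀ i j, i ≠ j → ¬ BetweenSet θ ((Q j).erase (ctr j)) (ctr i))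

def IsMiddleSigmaGalaxy (T : Tournament n) : Prop :=
  ∃ (θ : Equiv.Perm (Fin n)) (S : Finset (Fin n)) (c₁ c₂ : Fin n) (L₁ L₂ : Finset (Fin n))
    (m : ℕ) (Q : Fin m → Finset (Fin n)) (ctr : Fin m → Fin n),
    SigmaGalaxyDecomp T θ S c₁ c₂ L₁ L₂ NebKind.middle Q ctr

def IsLeftSigmaGalaxy (T : Tournament n) : Prop :=
  ∃ (θ : Equiv.Perm (Fin n)) (S : Finset (Fin n)) (c₁ c₂ : Fin n) (L₁ L₂ : Finset (Fin n))
    (m : ℕ) (Q : Fin m → Finset (Fin n)) (ctr : Fin m → Fin n),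
    SigmaGalaxyDecomp T θ S c₁ c₂ L₁ L₂ NebKind.left Q ctr

def IsRightSigmaGalaxy (T : Tournament n) : Prop :=
  ∃ (θ : Equiv.Perm (Fin n)) (S : Finset (Fin n)) (c₁ c₂ : Fin n) (L₁ L₂ : Finset (Fin n))
    (m : ℕ) (Q : Fin m → Finset (Fin n)) (ctr : Fin m → Fin n),
    SigmaGalaxyDecomp T θ S c₁ c₂ L₁ L₂ NebKind.right Q ctr

/-- The directed density from `X` to `Y`. -/
noncomputable def density (T : Tournament n) (X Y : Finset (Fin n)) : ℝ :=
  (Set.ncard {p : Fin n × Fin n | p.1 ∈ X ∧ p.2 ∈ Y ∧ T.adj p.1 p.2} : ℝ) /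
    ((X.card : ℝ) * (Y.card : ℝ))

/-- `(S i)` is a smooth `(c, lam, w)`-structure of `T`. -/
def IsSmoothStructure (T : Tournament n) (c lam : ℝ) {N : ℕ} (w : Fin N → Bool)
    (S : Fin N → Finset (Fin n)) : Prop :=
  (∀ i j, i ≠ j → Disjoint (S i) (S j)) ∧
  (∀ i, w i = false → c * (n : ℝ) ≤ ((S i).card : ℝ)) ∧
  (∀ i, w i = true → T.IsTransOn (S i) ∧ c * (T.trSize : ℝ) ≤ ((S i).card : ℝ)) ∧
  (∀ i j, i < j →
    (∀ v ∈ S i, 1 - lam ≤ T.density {v} (S j)) ∧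
    (∀ v ∈ S j, 1 - lam ≤ T.density (S i) {v}))

end Tournament

/-- The backward arcs of `K₆` under its canonical ordering. -/
def K6back : List (ℕ × ℕ) := [(3, 0), (5, 2), (5, 0), (4, 1)]

/-- The tournament `K₆`, on `Fin 6` with its canonical ordering. -/
def K6 : Tournament 6 where
  adj u v := (u.val, v.val) ∈ K6back ∨ (u < v ∧ (v.val, u.val) ∉ K6back)
  asymm := by decide
  total := by decide

/-- The pair `{H₁, H₂}` satisfies the Erdős–Hajnal conjecture: there is `ε > 0` such that
every `{H₁, H₂}`-free tournament `T` has a transitive subtournament of size `≥ |T| ^ ε`. -/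
def EHPair {n₁ n₂ : ℕ} (H₁ : Tournament n₁) (H₂ : Tournament n₂) : Prop :=
  ∃ ε : ℝ, 0 < ε ∧ ∀ (n : ℕ) (T : Tournament n),
    ¬ T.Contains H₁ → ¬ T.Contains H₂ → (n : ℝ) ^ ε ≤ (T.trSize : ℝ)

/-! Suppose no vertex of `A` works. Then every `g ∈ A` either receives an arc from every vertex
of some `S i` or sends an arc to every vertex of some `P j`, so by pigeonhole one of these
`m + t` classes `X` has at least `|A| / (m + t) ≥ b n` vertices, `b = c / (2(m + t))`.
If, say, `S i → X`, then `S i` together with a largest transitive subtournament of `X` is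
transitive, and criticality (`X` is a proper subset) gives
`f i · tr(T) + (b n)^ε ≤ |S i| + tr(X) ≤ tr(T) < n^ε`, i.e. `b^ε < 1 - f i`, which is exactly
`log_b (1 - f i) < ε` (`b < 1` because `X` misses `S i`). -/

theorem logb_one_sub_lt_of_mul_add_rpow_le {b N τ r ε : ℝ} (hb : 0 < b) (hb1 : b < 1)
    (hN : 0 < N) (hτ₀ : 0 ≤ τ) (hτ : τ < N ^ ε) (h : r * τ + (b * N) ^ ε ≤ τ) :
    Real.logb b (1 - r) < ε := by
  rw [Real.mul_rpow hb.le hN.le] at h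
  have hbε : 0 < b ^ ε := Real.rpow_pos_of_pos hb ε
  have hNε : 0 < N ^ ε := Real.rpow_pos_of_pos hN ε
  have hr : 0 < 1 - r := by nlinarith
  rw [Real.logb_lt_iff_lt_rpow_of_base_lt_one hb hb1 hr]
  refine lt_of_mul_lt_mul_right ?_ hNε.le
  nlinarith

namespace Tournament

variable {n : ℕ} (T : Tournament n)

theorem adj_of_not_adj {u v : Fin n} (huv : u ≠ v) (h : ¬ T.adj u v) : T.adj v u :=
  (T.total u v huv).resolve_left h

theorem isTransOn_singleton (v : Fin n) : T.IsTransOn {v} := by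
  intro u hu w hw _ _ huw _
  rw [mem_singleton] at hu hw
  subst hu hw
  exact (T.asymm _ _ huw huw).elim

theorem isTransOn_union_of_forall_adj {B W : Finset (Fin n)} (hB : T.IsTransOn B)
    (hW : T.IsTransOn W) (hBW : ∀ u ∈ B, ∀ v ∈ W, T.adj u v) : T.IsTransOn (B ∪ W) := by
  have hWB : ∀ v ∈ W, ∀ u ∈ B, ¬ T.adj v u := fun v hv u hu => T.asymm u v (hBW u hu v hv)
  intro u hu v hv w hw huv hvw
  rw [mem_union] at hu hv hw
  rcases hu with hu | hu <;> rcases hv with hv | hv <;> rcases hw with hw | hw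
  · exact hB u hu v hv w hw huv hvw
  · exact hBW u hu w hw
  · exact absurd hvw (hWB v hv w hw)
  · exact hBW u hu w hw
  · exact absurd huv (hWB u hu v hv)
  · exact absurd huv (hWB u hu v hv)
  · exact absurd hvw (hWB v hv w hw)
  · exact hW u hu v hv w hw huv hvw

theorem bddAbove_card_isTransOn (s : Finset (Fin n)) :
    BddAbove {k | ∃ u, u ⊆ s ∧ T.IsTransOn u ∧ u.card = k} := by
  refine ⟨n, ?_⟩
  rintro k ⟨u, -, -, rfl⟩
  simpa using card_le_card (subset_univ u)

theorem card_le_trSizeOn {s u : Finset (Fin n)} (hus : u ⊆ s) (hu : T.IsTransOn u) :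
    u.card ≤ T.trSizeOn s :=
  le_csSup (T.bddAbove_card_isTransOn s) ⟨u, hus, hu, rfl⟩

theorem exists_isTransOn_card_eq_trSizeOn (s : Finset (Fin n)) :
    ∃ u ⊆ s, T.IsTransOn u ∧ u.card = T.trSizeOn s := by
  have hne : {k | ∃ u, u ⊆ s ∧ T.IsTransOn u ∧ u.card = k}.Nonempty :=
    ⟨0, ∅, empty_subset s, fun u hu => by simp at hu, rfl⟩
  obtain ⟨u, hus, hu, hcard⟩ := Nat.sSup_mem hne (T.bddAbove_card_isTransOn s)
  exact ⟨u, hus, hu, hcard⟩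

theorem one_le_trSize (hn : 0 < n) : 1 ≤ T.trSize := by
  simpa [trSize] using T.card_le_trSizeOn (subset_univ _) (T.isTransOn_singleton ⟨0, hn⟩)

theorem exists_forall_adj_to_or_from {ι κ : Type*} {S : ι → Finset (Fin n)}
    {P : κ → Finset (Fin n)} {g : Fin n} (hS : ∀ i, g ∉ S i) (hP : ∀ j, g ∉ P j)
    (h : (∀ i, ∃ s ∈ S i, T.adj g s) → ∃ j, ∀ p ∈ P j, ¬ T.adj p g) :
    (∃ i, ∀ s ∈ S i, T.adj s g) ∨ ∃ j, ∀ p ∈ P j, T.adj g p := by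
  by_cases hout : ∀ i, ∃ s ∈ S i, T.adj g s
  · obtain ⟨j, hj⟩ := h hout
    exact .inr ⟨j, fun p hp => T.adj_of_not_adj (ne_of_mem_of_not_mem hp (hP j)) (hj p hp)⟩
  · push Not at hout
    obtain ⟨i, hi⟩ := hout
    exact .inl ⟨i, fun s hs => T.adj_of_not_adj (fun h => hS i (h ▸ hs)) (hi s hs)⟩

variable {T}

theorem EpsCritical.pos {ε : ℝ} (hT : T.EpsCritical ε) (hε : ε ≠ 0) : 0 < n := by
  rcases Nat.eq_zero_or_pos n with rfl | hn
  · have htr := hT.1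
    rw [Nat.cast_zero, Real.zero_rpow hε] at htr
    exact (htr.not_ge (Nat.cast_nonneg _)).elim
  · exact hn

theorem EpsCritical.logb_lt_of_isTransOn_union {ε b r : ℝ} (hT : T.EpsCritical ε)
    (hε : 0 < ε) (hb : 0 < b) (hr : 0 < r) {B X : Finset (Fin n)} (hBX : Disjoint B X)
    (hB : r * T.trSize ≤ B.card) (hX : b * n ≤ X.card)
    (hunion : ∀ W ⊆ X, T.IsTransOn W → T.IsTransOn (B ∪ W)) :
    Real.logb b (1 - r) < ε := by
  have hn : 0 < n := hT.pos hε.ne'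
  have htr : (1 : ℝ) ≤ T.trSize := by exact_mod_cast T.one_le_trSize hn
  obtain ⟨v, hv⟩ : B.Nonempty := by
    rw [← card_pos, ← Nat.cast_pos (α := ℝ)]
    nlinarith
  have hXuniv : X ≠ univ := fun h => disjoint_left.1 hBX hv (h ▸ mem_univ v)
  have hXn : (X.card : ℝ) < n := by
    exact_mod_cast (card_lt_iff_ne_univ X).2 hXuniv |>.trans_eq (Fintype.card_fin n)
  have hb1 : b < 1 := (mul_lt_iff_lt_one_left (by exact_mod_cast hn)).1 (hX.trans_lt hXn)
  obtain ⟨W, hWX, hW, hWcard⟩ := T.exists_isTransOn_card_eq_trSizeOn X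
  have hBW : (B.card : ℝ) + W.card ≤ T.trSize := by
    have := T.card_le_trSizeOn (subset_univ _) (hunion W hWX hW)
    rw [card_union_of_disjoint (hBX.mono_right hWX)] at this
    exact_mod_cast this
  have hXW : (X.card : ℝ) ^ ε ≤ W.card := hWcard ▸ hT.2 X hXuniv
  have hbX : (b * n) ^ ε ≤ (X.card : ℝ) ^ ε := Real.rpow_le_rpow (by positivity) hX hε.le
  exact logb_one_sub_lt_of_mul_add_rpow_le hb hb1 (by exact_mod_cast hn) (Nat.cast_nonneg _)
    hT.1 (by linarith)

end Tournament

theorem Finset.exists_card_le_mul_card_of_subset_biUnion {ι α : Type*} [Fintype ι]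
    [Nonempty ι] [DecidableEq α] {A : Finset α} {X : ι → Finset α}
    (hA : A ⊆ univ.biUnion X) : ∃ y, A.card ≤ Fintype.card ι * (X y).card := by
  obtain ⟨y, -, hy⟩ := exists_max_image univ (fun z => (X z).card) univ_nonempty
  refine ⟨y, ?_⟩
  calc A.card ≤ (univ.biUnion X).card := card_le_card hA
    _ ≤ ∑ z, (X z).card := card_biUnion_le
    _ ≤ Fintype.card ι * (X y).card := by
      simpa using sum_le_card_nsmul univ _ _ fun z _ => hy z (mem_univ z)

open Tournament

theorem stmt11_general (m t : ℕ) (hmt : 1 ≤ m + t) (f : Fin m → ℝ) (lv : Fin t → ℝ) (c ε : ℝ)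
    (hf : ∀ i, 0 < f i ∧ f i < 1) (hl : ∀ j, 0 < lv j ∧ lv j < 1)
    (hc : 0 < c ∧ c < 1) (hε : 0 < ε)
    (hεf : ∀ i, ε < Real.logb (c / (2 * ((m : ℝ) + (t : ℝ)))) (1 - f i))
    (hεl : ∀ j, ε < Real.logb (c / (2 * ((m : ℝ) + (t : ℝ)))) (1 - lv j))
    {n : ℕ} (T : Tournament n) (hT : T.EpsCritical ε)
    (S : Fin m → Finset (Fin n)) (P : Fin t → Finset (Fin n))
    (hStrans : ∀ i, T.IsTransOn (S i)) (hPtrans : ∀ j, T.IsTransOn (P j))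
    (hScard : ∀ i, f i * (T.trSize : ℝ) ≤ ((S i).card : ℝ))
    (hPcard : ∀ j, lv j * (T.trSize : ℝ) ≤ ((P j).card : ℝ))
    (A : Finset (Fin n))
    (hAS : ∀ i, Disjoint A (S i)) (hAP : ∀ j, Disjoint A (P j))
    (hAcard : c * (n : ℝ) ≤ (A.card : ℝ)) :
    ∃ g ∈ A, (∀ i, ∃ s ∈ S i, T.adj g s) ∧ (∀ j, ∃ p ∈ P j, T.adj p g) := by
  classical
  by_contra hcon
  push Not at hcon
  let X : Fin m ⊕ Fin t → Finset (Fin n) := Sum.elim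
    (fun i => {g ∈ A | ∀ s ∈ S i, T.adj s g}) (fun j => {g ∈ A | ∀ p ∈ P j, T.adj g p})
  have hcover : A ⊆ univ.biUnion X := fun g hg => by
    simpa [X, hg] using T.exists_forall_adj_to_or_from (fun i => disjoint_left.1 (hAS i) hg)
      (fun j => disjoint_left.1 (hAP j) hg) (hcon g hg)
  have : Nonempty (Fin m ⊕ Fin t) := Fintype.card_pos_iff.mp (by
    simp only [Fintype.card_sum, Fintype.card_fin]; omega)
  obtain ⟨y, hy⟩ := exists_card_le_mul_card_of_subset_biUnion hcover
  have hmt' : (1 : ℝ) ≤ m + t := by exact_mod_cast hmt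
  have hb : 0 < c / (2 * ((m : ℝ) + t)) := div_pos hc.1 (by linarith)
  have hXy : c / (2 * ((m : ℝ) + t)) * n ≤ (X y).card := by
    have hy' : (A.card : ℝ) ≤ ((m : ℝ) + t) * (X y).card := by
      exact_mod_cast (by simpa using hy)
    rw [div_mul_eq_mul_div, div_le_iff₀ (by positivity)]
    nlinarith [(X y).card.cast_nonneg (α := ℝ)]
  rcases y with i | j
  · refine (hεf i).not_gt (hT.logb_lt_of_isTransOn_union hε hb (hf i).1
      ((hAS i).symm.mono_right (filter_subset _ _)) (hScard i) hXy fun W hW hWtr => ?_)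
    exact T.isTransOn_union_of_forall_adj (hStrans i) hWtr fun s hs g hg =>
      (mem_filter.1 (hW hg)).2 s hs
  · refine (hεl j).not_gt (hT.logb_lt_of_isTransOn_union hε hb (hl j).1
      ((hAP j).symm.mono_right (filter_subset _ _)) (hPcard j) hXy fun W hW hWtr => ?_)
    rw [union_comm]
    exact T.isTransOn_union_of_forall_adj hWtr (hPtrans j) fun g hg p hp =>
      (mem_filter.1 (hW hg)).2 p hp

theorem stmt11 (m t : ℕ) (hmt : 1 ≤ m + t) (f : Fin m → ℝ) (lv : Fin t → ℝ) (c ε : ℝ)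
    (hf : ∀ i, 0 < f i ∧ f i < 1) (hl : ∀ j, 0 < lv j ∧ lv j < 1)
    (hc : 0 < c ∧ c < 1) (hε : 0 < ε)
    (hεf : ∀ i, ε < Real.logb (c / (2 * ((m : ℝ) + (t : ℝ)))) (1 - f i))
    (hεl : ∀ j, ε < Real.logb (c / (2 * ((m : ℝ) + (t : ℝ)))) (1 - lv j))
    {n : ℕ} (T : Tournament n) (hT : T.EpsCritical ε)
    (S : Fin m → Finset (Fin n)) (P : Fin t → Finset (Fin n))
    (hSdisj : ∀ i j, i ≠ j → Disjoint (S i) (S j))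
    (hPdisj : ∀ i j, i ≠ j → Disjoint (P i) (P j))
    (hSPdisj : ∀ i j, Disjoint (S i) (P j))
    (hStrans : ∀ i, T.IsTransOn (S i)) (hPtrans : ∀ j, T.IsTransOn (P j))
    (hScard : ∀ i, f i * (T.trSize : ℝ) ≤ ((S i).card : ℝ))
    (hPcard : ∀ j, lv j * (T.trSize : ℝ) ≤ ((P j).card : ℝ))
    (A : Finset (Fin n))
    (hAS : ∀ i, Disjoint A (S i)) (hAP : ∀ j, Disjoint A (P j))
    (hAcard : c * (n : ℝ) ≤ (A.card : ℝ)) :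
    ∃ g ∈ A, (∀ i, ∃ s ∈ S i, T.adj g s) ∧ (∀ j, ∃ p ∈ P j, T.adj p g) :=
  stmt11_general m t hmt f lv c ε hf hl hc hε hεf hεl T hT S P hStrans hPtrans hScard hPcard A hAS
    hAP hAcard
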